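/- arXiv:1304.2003 — 2 statements merged into one kernel-verified Lean document; each statement's English description precedes it below -/
import Mathlib

section
/- Ahlfors' lemma for C² densities: Let λ : 𝔻 → (0,∞) be C² with Δ(log λ)(z) ≥ 4 λ(z)² for all z ∈ 𝔻, and suppose log λ is bounded above on 𝔻 near the boundary in the sense that limsup_{|z|→1} λ(z)(1−|z|²) ≤ 1. Then λ(z) ≤ 1/(1 − |z|²) for all z ∈ 𝔻. -/
/-!
Put `ρ = λ · (1 - |z|²)`. Since `Δ log (1 - |z|²) = -4 / (1 - |z|²)²`, the curvature
hypothesis gives `Δ log ρ ≥ 4λ² - 4 / (1 - |z|²)²`. At an interior local maximum of `ρ` the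
Laplacian of `log ρ` is `≤ 0` (second derivative test on the two coordinate lines), so `ρ ≤ 1`
there. On a closed disk of radius `R < 1` close to `1`, `ρ` attains its maximum either at such an
interior point or on the boundary circle, where the `limsup` hypothesis gives `ρ ≤ 1 + ε`.
-/

open Set

/-- The Laplacian of `u : ℂ → ℝ` in the real coordinates. -/
noncomputable def laplacian (u : ℂ → ℝ) (z : ℂ) : ℝ :=
  fderiv ℝ (fun w => fderiv ℝ u w 1) z 1 +
    fderiv ℝ (fun w => fderiv ℝ u w Complex.I) z Complex.I

open Filter Topology

theorem deriv_deriv_nonpos_of_isLocalMax {g : ℝ → ℝ} {x₀ : ℝ} (hmax : IsLocalMax g x₀)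
    (hc : ContinuousAt g x₀) : deriv (deriv g) x₀ ≤ 0 := by
  -- If `g'' > 0`, the second derivative test also makes `x₀` a local minimum, so `g` is locally
  -- constant and `g'' = 0` after all.
  by_contra! hpos
  have hmin : IsLocalMin g x₀ := isLocalMin_of_deriv_deriv_pos hpos hmax.deriv_eq_zero hc
  have hconst : g =ᶠ[𝓝 x₀] fun _ => g x₀ := by
    filter_upwards [hmax, hmin] with x h₁ h₂ using le_antisymm h₁ h₂
  have : deriv (deriv g) x₀ = 0 := by
    rw [hconst.deriv.deriv_eq]
    simp
  exact hpos.ne' this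

section SecondDirectionalDerivative

variable {E : Type*} [NormedAddCommGroup E] [NormedSpace ℝ E]

theorem ContDiffAt.differentiableAt_fderiv_apply {u : E → ℝ} {x : E} (hu : ContDiffAt ℝ 2 u x)
    (v : E) : DifferentiableAt ℝ (fun w => fderiv ℝ u w v) x :=
  ((hu.fderiv_right (m := 1) one_add_one_eq_two.le).clm_apply contDiffAt_const).differentiableAt
    one_ne_zero

theorem deriv_deriv_comp_add_smul {u : E → ℝ} {x : E} (hu : ContDiffAt ℝ 2 u x) (v : E) :
    deriv (deriv fun t : ℝ => u (x + t • v)) 0 = fderiv ℝ (fun w => fderiv ℝ u w v) x v := by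
  have hline (t : ℝ) : HasDerivAt (fun t : ℝ => x + t • v) v t := by
    simpa using ((hasDerivAt_id t).smul_const v).const_add x
  have hline_cont : Tendsto (fun t : ℝ => x + t • v) (𝓝 0) (𝓝 x) := by
    simpa using (hline 0).continuousAt.tendsto
  have hfirst : deriv (fun t : ℝ => u (x + t • v)) =ᶠ[𝓝 0] fun t => fderiv ℝ u (x + t • v) v := by
    filter_upwards [hline_cont.eventually (hu.eventually (by simp))] with t ht
    exact ((ht.differentiableAt two_ne_zero).hasFDerivAt.comp_hasDerivAt t (hline t)).deriv
  rw [hfirst.deriv_eq]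
  exact ((hu.differentiableAt_fderiv_apply v).hasFDerivAt.comp_hasDerivAt_of_eq 0 (hline 0)
    (by simp)).deriv

theorem fderiv_fderiv_apply_nonpos_of_isLocalMax {u : E → ℝ} {x : E} (hu : ContDiffAt ℝ 2 u x)
    (hmax : IsLocalMax u x) (v : E) : fderiv ℝ (fun w => fderiv ℝ u w v) x v ≤ 0 := by
  rw [← deriv_deriv_comp_add_smul hu v]
  have hline : Continuous fun t : ℝ => x + t • v := by fun_prop
  have hx : x + (0:ℝ) • v = x := by simp
  exact deriv_deriv_nonpos_of_isLocalMax
    (IsLocalMax.comp_continuous (g := fun t : ℝ => x + t • v) (by rwa [hx]) hline.continuousAt)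
    (hu.continuousAt.comp_of_eq hline.continuousAt hx)

theorem fderiv_fderiv_apply_add {f g : E → ℝ} {x : E} (hf : ContDiffAt ℝ 2 f x)
    (hg : ContDiffAt ℝ 2 g x) (v : E) :
    fderiv ℝ (fun w => fderiv ℝ (fun w => f w + g w) w v) x v =
      fderiv ℝ (fun w => fderiv ℝ f w v) x v + fderiv ℝ (fun w => fderiv ℝ g w v) x v := by
  have hfirst : (fun w => fderiv ℝ (fun w => f w + g w) w v)
      =ᶠ[𝓝 x] fun w => fderiv ℝ f w v + fderiv ℝ g w v := by
    filter_upwards [hf.eventually (by simp), hg.eventually (by simp)] with w hfw hgw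
    rw [fderiv_fun_add (hfw.differentiableAt two_ne_zero) (hgw.differentiableAt two_ne_zero)]
    rfl
  rw [hfirst.fderiv_eq,
    fderiv_fun_add (hf.differentiableAt_fderiv_apply v) (hg.differentiableAt_fderiv_apply v)]
  rfl

end SecondDirectionalDerivative

theorem laplacian_nonpos_of_isLocalMax {u : ℂ → ℝ} {z : ℂ} (hu : ContDiffAt ℝ 2 u z)
    (hmax : IsLocalMax u z) : laplacian u z ≤ 0 :=
  add_nonpos (fderiv_fderiv_apply_nonpos_of_isLocalMax hu hmax 1)
    (fderiv_fderiv_apply_nonpos_of_isLocalMax hu hmax Complex.I)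

theorem laplacian_add {f g : ℂ → ℝ} {z : ℂ} (hf : ContDiffAt ℝ 2 f z) (hg : ContDiffAt ℝ 2 g z) :
    laplacian (fun w => f w + g w) z = laplacian f z + laplacian g z := by
  simp only [laplacian, fderiv_fderiv_apply_add hf hg]
  ring

theorem one_sub_norm_sq_pos {E : Type*} [SeminormedAddGroup E] {x : E} (hx : ‖x‖ < 1) :
    0 < 1 - ‖x‖ ^ 2 :=
  sub_pos.mpr (pow_lt_one₀ (norm_nonneg x) hx two_ne_zero)

section UnitBall

variable {E : Type*} [NormedAddCommGroup E] [InnerProductSpace ℝ E]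

theorem fderiv_log_one_sub_norm_sq_apply {x : E} (hx : ‖x‖ < 1) (v : E) :
    fderiv ℝ (fun w : E => Real.log (1 - ‖w‖ ^ 2)) x v = -2 * inner ℝ x v / (1 - ‖x‖ ^ 2) := by
  have h := ((hasStrictFDerivAt_norm_sq x).hasFDerivAt.const_sub 1).log
    (one_sub_norm_sq_pos hx).ne'
  rw [h.fderiv]
  simp only [smul_neg, neg_apply, smul_apply, coe_innerSL_apply, nsmul_eq_mul, Nat.cast_ofNat,
    smul_eq_mul]
  ring

theorem fderiv_fderiv_log_one_sub_norm_sq_apply {x : E} (hx : ‖x‖ < 1) (v : E) :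
    fderiv ℝ (fun w => fderiv ℝ (fun w : E => Real.log (1 - ‖w‖ ^ 2)) w v) x v =
      -2 * ‖v‖ ^ 2 / (1 - ‖x‖ ^ 2) - 4 * inner ℝ x v ^ 2 / (1 - ‖x‖ ^ 2) ^ 2 := by
  have hfirst : (fun w => fderiv ℝ (fun w : E => Real.log (1 - ‖w‖ ^ 2)) w v) =ᶠ[𝓝 x]
      fun w => -2 * inner ℝ v w * (1 - ‖w‖ ^ 2)⁻¹ := by
    filter_upwards [Metric.isOpen_ball.mem_nhds (mem_ball_zero_iff.mpr hx)] with w hw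
    rw [fderiv_log_one_sub_norm_sq_apply (mem_ball_zero_iff.mp hw), real_inner_comm, div_eq_mul_inv]
  have hnum := ((innerSL ℝ v).hasFDerivAt (x := x)).const_mul (-2 : ℝ)
  have hs := (one_sub_norm_sq_pos hx).ne'
  have hinv := (hasDerivAt_inv hs).comp_hasFDerivAt x
    ((hasStrictFDerivAt_norm_sq x).hasFDerivAt.const_sub 1)
  have hderiv : HasFDerivAt (fun w => -2 * inner ℝ v w * (1 - ‖w‖ ^ 2)⁻¹) _ x :=
    hnum.fun_mul hinv
  rw [hfirst.fderiv_eq, hderiv.fderiv]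
  simp only [coe_innerSL_apply, real_inner_comm, add_apply, neg_apply, smul_apply, smul_eq_mul,
    nsmul_eq_mul, Nat.cast_ofNat, real_inner_self_eq_norm_sq]
  field_simp
  ring

end UnitBall

theorem laplacian_log_one_sub_norm_sq {z : ℂ} (hz : ‖z‖ < 1) :
    laplacian (fun w => Real.log (1 - ‖w‖ ^ 2)) z = -4 / (1 - ‖z‖ ^ 2) ^ 2 := by
  have hs := (one_sub_norm_sq_pos hz).ne'
  rw [laplacian, fderiv_fderiv_log_one_sub_norm_sq_apply hz,
    fderiv_fderiv_log_one_sub_norm_sq_apply hz]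
  have hnorm : ‖z‖ ^ 2 = z.re ^ 2 + z.im ^ 2 := by rw [Complex.sq_norm, Complex.normSq_apply]; ring
  simp only [Complex.inner, norm_one, Complex.norm_I, Complex.mul_re, Complex.conj_re,
    Complex.conj_im, Complex.I_re, Complex.I_im, Complex.one_re, Complex.one_im]
  field_simp
  rw [hnorm]
  ring

theorem forall_mem_ball_le_of_isLocalMax_le {E : Type*} [NormedAddCommGroup E] [ProperSpace E]
    {ρ : E → ℝ} {M : ℝ} (hcont : ContinuousOn ρ (Metric.ball 0 1))
    (hmax : ∀ z ∈ Metric.ball (0 : E) 1, IsLocalMax ρ z → ρ z ≤ M)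
    (hbdry : ∀ ε > 0, ∃ r < 1, ∀ z : E, r < ‖z‖ → ‖z‖ < 1 → ρ z ≤ M + ε) :
    ∀ z ∈ Metric.ball (0 : E) 1, ρ z ≤ M := by
  intro z hz
  rw [mem_ball_zero_iff] at hz
  refine le_of_forall_pos_le_add fun ε hε => ?_
  obtain ⟨r, hr1, hr⟩ := hbdry ε hε
  rcases lt_or_ge r ‖z‖ with hzr | hzr
  · exact hr z hzr hz
  obtain ⟨R, hrR, hR1⟩ := exists_between hr1
  have hRsub : Metric.closedBall (0 : E) R ⊆ Metric.ball 0 1 :=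
    Metric.closedBall_subset_ball (by linarith)
  obtain ⟨z₀, hz₀, hz₀max⟩ := (isCompact_closedBall (0 : E) R).exists_isMaxOn
    ⟨z, mem_closedBall_zero_iff.mpr (by linarith)⟩ (hcont.mono hRsub)
  have hz : ρ z ≤ ρ z₀ := hz₀max (mem_closedBall_zero_iff.mpr (by linarith))
  rw [mem_closedBall_zero_iff] at hz₀
  rcases hz₀.lt_or_eq with hz₀R | hz₀R
  · have : IsLocalMax ρ z₀ :=
      hz₀max.isLocalMax (Metric.closedBall_mem_nhds_of_mem (mem_ball_zero_iff.mpr hz₀R))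
    linarith [hmax z₀ (hRsub (mem_closedBall_zero_iff.mpr hz₀)) this]
  · exact hz.trans (hr z₀ (by linarith) (by linarith))

theorem mul_one_sub_norm_sq_le_one_of_isLocalMax {lam : ℂ → ℝ} {z : ℂ} (hz : ‖z‖ < 1)
    (hpos : 0 < lam z) (hC2 : ContDiffAt ℝ 2 lam z)
    (hcurv : 4 * lam z ^ 2 ≤ laplacian (fun w => Real.log (lam w)) z)
    (hmax : IsLocalMax (fun w => lam w * (1 - ‖w‖ ^ 2)) z) : lam z * (1 - ‖z‖ ^ 2) ≤ 1 := by
  have hs := one_sub_norm_sq_pos hz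
  have hlog_lam : ContDiffAt ℝ 2 (fun w => Real.log (lam w)) z := hC2.log hpos.ne'
  have hlog_s : ContDiffAt ℝ 2 (fun w : ℂ => Real.log (1 - ‖w‖ ^ 2)) z :=
    (contDiffAt_const.sub (contDiff_norm_sq ℝ).contDiffAt).log hs.ne'
  have hmax_log : IsLocalMax (fun w => Real.log (lam w) + Real.log (1 - ‖w‖ ^ 2)) z := by
    filter_upwards [hmax, hC2.continuousAt.eventually (lt_mem_nhds hpos),
      Metric.isOpen_ball.mem_nhds (mem_ball_zero_iff.mpr hz)] with w hw hlam hw1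
    have hsw := one_sub_norm_sq_pos (mem_ball_zero_iff.mp hw1)
    rw [← Real.log_mul hlam.ne' hsw.ne', ← Real.log_mul hpos.ne' hs.ne']
    exact Real.log_le_log (mul_pos hlam hsw) hw
  have hlap := laplacian_nonpos_of_isLocalMax (hlog_lam.add hlog_s) hmax_log
  rw [laplacian_add hlog_lam hlog_s, laplacian_log_one_sub_norm_sq hz] at hlap
  have hsq : (lam z * (1 - ‖z‖ ^ 2)) ^ 2 ≤ 1 := by
    rw [mul_pow, ← le_div_iff₀ (by positivity)]
    have : -4 / (1 - ‖z‖ ^ 2) ^ 2 = -4 * (1 / (1 - ‖z‖ ^ 2) ^ 2) := by ring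
    linarith
  exact (sq_le_one_iff₀ (by positivity)).mp hsq

/-- Ahlfors' lemma for `C²` densities: if `λ > 0` is `C²` on the unit disk with
`Δ(log λ) ≥ 4λ²` (curvature `≤ −4`), and `limsup_{|z|→1} λ(z)(1−|z|²) ≤ 1`, then
`λ(z) ≤ 1/(1−|z|²)`, the hyperbolic density, throughout the disk. -/
theorem ahlfors_lemma (lam : ℂ → ℝ)
    (hpos : ∀ z ∈ Metric.ball (0:ℂ) 1, 0 < lam z)
    (hC2 : ContDiffOn ℝ 2 lam (Metric.ball (0:ℂ) 1))
    (hcurv : ∀ z ∈ Metric.ball (0:ℂ) 1,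
      4 * lam z ^ 2 ≤ laplacian (fun w => Real.log (lam w)) z)
    (hlimsup : ∀ ε > (0:ℝ), ∃ r : ℝ, r < 1 ∧ ∀ z : ℂ,
      r < ‖z‖ → ‖z‖ < 1 → lam z * (1 - ‖z‖ ^ 2) ≤ 1 + ε) :
    ∀ z ∈ Metric.ball (0:ℂ) 1, lam z ≤ 1 / (1 - ‖z‖ ^ 2) := by
  intro z hz
  have hρ := forall_mem_ball_le_of_isLocalMax_le (ρ := fun w => lam w * (1 - ‖w‖ ^ 2))
    (hC2.continuousOn.mul (by fun_prop))
    (fun w hw hmax => mul_one_sub_norm_sq_le_one_of_isLocalMax (mem_ball_zero_iff.mp hw)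
      (hpos w hw) (hC2.contDiffAt (Metric.isOpen_ball.mem_nhds hw)) (hcurv w hw) hmax)
    hlimsup z hz
  rwa [le_div_iff₀ (one_sub_norm_sq_pos (mem_ball_zero_iff.mp hz))]
end

section
/- Maximum principle comparison: let G ⊆ ℂ be a bounded domain and u, v : G → ℝ continuous on the closure of G with u, v ∈ C²(G), Δu ≥ 4e^{2u} and Δv = 4e^{2v} on G, and u ≤ v on ∂G. Then u ≤ v throughout G. -/
/-!
If `u > v` somewhere in `G`, then `u - v` attains a positive maximum at an interior point `z₀`
(it is `≤ 0` on `∂G`). There every second directional derivative of `u - v` is `≤ 0`, so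
`Δu(z₀) ≤ Δv(z₀) = 4e^{2v(z₀)} < 4e^{2u(z₀)} ≤ Δu(z₀)`.
-/

open Set Filter Topology

/-- If `f''(x₀) > 2c > 0`, the second-derivative test gives `f - c (x - x₀)²` a local minimum at
`x₀`; together with the local maximum of `f` this forces `(x - x₀)² ≤ 0` near `x₀`. -/
theorem IsLocalMax.deriv_deriv_nonpos {f : ℝ → ℝ} {x₀ : ℝ} (hmax : IsLocalMax f x₀)
    (hf : ∀ᶠ x in 𝓝 x₀, DifferentiableAt ℝ f x) : deriv (deriv f) x₀ ≤ 0 := by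
  by_contra! hpos
  obtain ⟨c, hc, hc2⟩ : ∃ c : ℝ, 0 < c ∧ 2 * c < deriv (deriv f) x₀ :=
    ⟨deriv (deriv f) x₀ / 4, by positivity, by linarith⟩
  set g : ℝ → ℝ := fun x => f x - c * (x - x₀) ^ 2
  have hdg : deriv g =ᶠ[𝓝 x₀] fun x => deriv f x - c * (2 * (x - x₀)) := by
    filter_upwards [hf] with x hx
    simp only [g]
    rw [deriv_fun_sub hx (by fun_prop)]
    simp
  have hmin : IsLocalMin g x₀ := by
    refine isLocalMin_of_deriv_deriv_pos ?_ ?_ ?_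
    · rw [hdg.deriv_eq, deriv_fun_sub (differentiableAt_of_deriv_ne_zero hpos.ne') (by fun_prop),
        ((((hasDerivAt_id' x₀).sub_const x₀).const_mul 2).const_mul c).deriv]
      linarith
    · rw [hdg.eq_of_nhds, hmax.deriv_eq_zero]; simp
    · exact (hf.self_of_nhds.continuousAt).sub (by fun_prop)
  have hconst : ∀ᶠ x in 𝓝 x₀, x = x₀ := by
    filter_upwards [hmax, hmin] with x hx hx'
    by_contra hne
    have hsq : 0 < (x - x₀) ^ 2 := by positivity [sub_ne_zero.2 hne]
    simp only [g, sub_self] at hx'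
    nlinarith [mul_pos hc hsq]
  obtain ⟨x, hx, hne⟩ := ((hconst.filter_mono nhdsWithin_le_nhds).and
    (self_mem_nhdsWithin (s := {x₀}ᶜ))).exists
  exact hne hx

theorem IsLocalMax.fderiv_fderiv_apply_nonpos {E : Type*} [NormedAddCommGroup E]
    [NormedSpace ℝ E] {f : E → ℝ} {x₀ : E} (e : E) (hmax : IsLocalMax f x₀)
    (hf : ∀ᶠ x in 𝓝 x₀, DifferentiableAt ℝ f x)
    (hf' : DifferentiableAt ℝ (fun x => fderiv ℝ f x e) x₀) :
    fderiv ℝ (fun x => fderiv ℝ f x e) x₀ e ≤ 0 := by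
  let γ : ℝ → E := fun t => x₀ + t • e
  have hγ : ∀ t, HasDerivAt γ e t := fun t => by
    simpa [γ] using ((hasDerivAt_id t).smul_const e).const_add x₀
  have hγ0 : γ 0 = x₀ := by simp [γ]
  have hfγ : ∀ᶠ t in 𝓝 0, DifferentiableAt ℝ f (γ t) :=
    ((by fun_prop : Continuous γ).tendsto' 0 x₀ hγ0).eventually hf
  have hderiv : deriv (f ∘ γ) =ᶠ[𝓝 0] fun t => fderiv ℝ f (γ t) e := by
    filter_upwards [hfγ] with t ht
    exact (ht.hasFDerivAt.comp_hasDerivAt t (hγ t)).deriv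
  rw [← hγ0] at hmax hf'
  calc fderiv ℝ (fun x => fderiv ℝ f x e) x₀ e = deriv (deriv (f ∘ γ)) 0 := by
        rw [hderiv.deriv_eq, ← hγ0]
        exact (hf'.hasFDerivAt.comp_hasDerivAt 0 (hγ 0)).deriv.symm
    _ ≤ 0 := (hmax.comp_continuous (by fun_prop)).deriv_deriv_nonpos
        (hfγ.mono fun t ht => ht.comp t (hγ t).differentiableAt)

section SecondDerivative

variable {𝕜 E F : Type*} [NontriviallyNormedField 𝕜] [NormedAddCommGroup E] [NormedSpace 𝕜 E]
  [NormedAddCommGroup F] [NormedSpace 𝕜 F] {f g : E → F} {x : E}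

theorem ContDiffAt.eventually_differentiableAt (hf : ContDiffAt 𝕜 2 f x) :
    ∀ᶠ y in 𝓝 x, DifferentiableAt 𝕜 f y :=
  (hf.eventually (by simp)).mono fun _ hy => hy.differentiableAt two_ne_zero

theorem ContDiffAt.differentiableAt_fderiv_apply_s9 (hf : ContDiffAt 𝕜 2 f x) (e : E) :
    DifferentiableAt 𝕜 (fun y => fderiv 𝕜 f y e) x :=
  ((hf.fderiv_right le_rfl).differentiableAt one_ne_zero).clm_apply (differentiableAt_const e)

theorem fderiv_fderiv_apply_sub (hf : ContDiffAt 𝕜 2 f x) (hg : ContDiffAt 𝕜 2 g x) (e : E) :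
    fderiv 𝕜 (fun y => fderiv 𝕜 (f - g) y e) x e =
      fderiv 𝕜 (fun y => fderiv 𝕜 f y e) x e - fderiv 𝕜 (fun y => fderiv 𝕜 g y e) x e := by
  have hsplit : (fun y => fderiv 𝕜 (f - g) y e) =ᶠ[𝓝 x]
      fun y => fderiv 𝕜 f y e - fderiv 𝕜 g y e := by
    filter_upwards [hf.eventually_differentiableAt, hg.eventually_differentiableAt] with y hfy hgy
    rw [fderiv_sub hfy hgy, sub_apply]
  rw [hsplit.fderiv_eq, fderiv_fun_sub (hf.differentiableAt_fderiv_apply_s9 e)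
    (hg.differentiableAt_fderiv_apply_s9 e), sub_apply]

end SecondDerivative

theorem laplacian_sub {f g : ℂ → ℝ} {z : ℂ} (hf : ContDiffAt ℝ 2 f z) (hg : ContDiffAt ℝ 2 g z) :
    laplacian (f - g) z = laplacian f z - laplacian g z := by
  simp only [laplacian, fderiv_fderiv_apply_sub hf hg]
  ring

theorem IsLocalMax.laplacian_nonpos {f : ℂ → ℝ} {z : ℂ} (hmax : IsLocalMax f z)
    (hf : ContDiffAt ℝ 2 f z) : laplacian f z ≤ 0 :=
  add_nonpos
    (hmax.fderiv_fderiv_apply_nonpos 1 hf.eventually_differentiableAt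
      (hf.differentiableAt_fderiv_apply_s9 1))
    (hmax.fderiv_fderiv_apply_nonpos Complex.I hf.eventually_differentiableAt
      (hf.differentiableAt_fderiv_apply_s9 Complex.I))

theorem exists_isLocalMax_of_frontier_le {E : Type*} [MetricSpace E] [ProperSpace E]
    {G : Set E} (hG : IsOpen G) (hGb : Bornology.IsBounded G) {w : E → ℝ}
    (hw : ContinuousOn w (closure G)) {c : ℝ} (hbd : ∀ z ∈ frontier G, w z ≤ c) {z : E}
    (hz : z ∈ G) (hcz : c < w z) : ∃ z₀ ∈ G, IsLocalMax w z₀ ∧ c < w z₀ := by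
  obtain ⟨z₀, hz₀, hmax⟩ := hGb.isCompact_closure.exists_isMaxOn ⟨z, subset_closure hz⟩ hw
  have hcz₀ : c < w z₀ := hcz.trans_le (hmax (subset_closure hz))
  have hz₀G : z₀ ∈ G := by
    by_contra hz₀G
    exact (hbd z₀ (hG.frontier_eq ▸ ⟨hz₀, hz₀G⟩)).not_gt hcz₀
  exact ⟨z₀, hz₀G, mem_of_superset (hG.mem_nhds hz₀G) fun y hy => hmax (subset_closure hy), hcz₀⟩

/-- Maximum principle comparison: on a bounded domain `G`, if `u, v` are continuous on
`closure G`, `C²` on `G`, with `Δu ≥ 4e^{2u}` and `Δv = 4e^{2v}` on `G`, and `u ≤ v` on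
`∂G`, then `u ≤ v` throughout `G`. -/
theorem maximum_principle_comparison
    (G : Set ℂ) (hG : IsOpen G) (hGb : Bornology.IsBounded G)
    (u v : ℂ → ℝ)
    (hu : ContinuousOn u (closure G)) (hv : ContinuousOn v (closure G))
    (hu2 : ContDiffOn ℝ 2 u G) (hv2 : ContDiffOn ℝ 2 v G)
    (hΔu : ∀ z ∈ G, 4 * Real.exp (2 * u z) ≤ laplacian u z)
    (hΔv : ∀ z ∈ G, laplacian v z = 4 * Real.exp (2 * v z))
    (hbd : ∀ z ∈ frontier G, u z ≤ v z) :
    ∀ z ∈ G, u z ≤ v z := by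
  intro z hz
  by_contra! hvu
  obtain ⟨z₀, hz₀, hmax, hpos⟩ := exists_isLocalMax_of_frontier_le hG hGb (hu.sub hv)
    (fun y hy => sub_nonpos.2 (hbd y hy)) hz (sub_pos.2 hvu)
  have hu₀ := hu2.contDiffAt (hG.mem_nhds hz₀)
  have hv₀ := hv2.contDiffAt (hG.mem_nhds hz₀)
  have hlap := hmax.laplacian_nonpos (hu₀.sub hv₀)
  rw [laplacian_sub hu₀ hv₀, hΔv z₀ hz₀] at hlap
  have hexp : Real.exp (2 * v z₀) < Real.exp (2 * u z₀) :=
    Real.exp_lt_exp.2 (by linarith [sub_pos.1 hpos])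
  linarith [hΔu z₀ hz₀]
end
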